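/- (Error propagation under state-action coverage.) Let d^D be a distribution on S×A and C_π ≥ 0 be such that d^π(s,a) ≤ C_π · d^D(s,a) for all (s,a). Then for any function f : S×A → ℝ, |J_f(π) − J(π)| ≤ (√C_π / (1−γ)) · √(E_{(s,a)~d^D}[(f(s,a) − (T^π f)(s,a))²]). -/

import Mathlib

open scoped BigOperators

noncomputable section

/-- The policy-specific Bellman operator:
`(T^π f)(s,a) = R(s,a) + γ E_{s' ~ P(·|s,a)}[f(s',π)]`. -/
def bellmanOp {S A : Type*} [Fintype S] [Fintype A] (P : S → A → S → ℝ)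
    (R : S → A → ℝ) (γ : ℝ) (pol : S → A → ℝ) (f : S → A → ℝ) : S → A → ℝ :=
  fun s a => R s a + γ * ∑ s', P s a s' * ∑ a', pol s' a' * f s' a'

/-- `occt P pol d0 t s a = Pr_π[s_t = s, a_t = a]`, the time-`t` state-action
distribution of the stationary policy `pol` started from `d0`. -/
def occt {S A : Type*} [Fintype S] [Fintype A] (P : S → A → S → ℝ)
    (pol : S → A → ℝ) (d0 : S → ℝ) : ℕ → S → A → ℝ
  | 0 => fun s a => d0 s * pol s a
  | (t + 1) => fun s' a' => (∑ s, ∑ a, occt P pol d0 t s a * P s a s') * pol s' a'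

/-- Discounted state-action occupancy `d^π = (1-γ) Σ_t γ^t d_t^π`. -/
def docc {S A : Type*} [Fintype S] [Fintype A] (P : S → A → S → ℝ)
    (pol : S → A → ℝ) (d0 : S → ℝ) (γ : ℝ) (s : S) (a : A) : ℝ :=
  (1 - γ) * ∑' t : ℕ, γ ^ t * occt P pol d0 t s a

/-- Expected discounted return `J(π) = E_π[Σ_t γ^t r_t]`. -/
def Jret {S A : Type*} [Fintype S] [Fintype A] (P : S → A → S → ℝ)
    (R : S → A → ℝ) (γ : ℝ) (pol : S → A → ℝ) (d0 : S → ℝ) : ℝ :=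
  ∑' t : ℕ, γ ^ t * ∑ s, ∑ a, occt P pol d0 t s a * R s a

/-- `J_f(π) = E_{s ~ d0}[f(s,π)]`. -/
def Jf {S A : Type*} [Fintype S] [Fintype A] (d0 : S → ℝ) (pol : S → A → ℝ)
    (f : S → A → ℝ) : ℝ :=
  ∑ s, d0 s * ∑ a, pol s a * f s a

/-!
Write `g = f - T^π f` and `d_t` for the time-`t` state-action distribution. One step of the chain
gives `E_{d_t}[T^π f] = E_{d_t}[R] + γ E_{d_{t+1}}[f]`, so `Σ_t γ^t E_{d_t}[g]` telescopes to
`J_f(π) - J(π)`; exchanging the discounted sum with the finite sum over `S × A` rewrites it as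
`(1-γ)⁻¹ E_{d^π}[g]`. Since `d^π` is a probability distribution dominated by `C_π d^D`,
Cauchy–Schwarz gives `E_{d^π}[g]² ≤ E_{d^π}[g²] ≤ C_π E_{d^D}[g²]`.
-/

theorem abs_sum_mul_le_sqrt_mul_sqrt_of_le_mul {ι : Type*} [Fintype ι] {w d : ι → ℝ}
    {C : ℝ} (hC : 0 ≤ C) (hw0 : ∀ i, 0 ≤ w i) (hw1 : ∑ i, w i = 1) (hwd : ∀ i, w i ≤ C * d i)
    (g : ι → ℝ) :
    |∑ i, w i * g i| ≤ √C * √(∑ i, d i * g i ^ 2) := by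
  rw [← Real.sqrt_mul hC]
  refine Real.abs_le_sqrt ?_
  calc (∑ i, w i * g i) ^ 2 ≤ (∑ i, w i) * ∑ i, w i * g i ^ 2 :=
        Finset.sum_sq_le_sum_mul_sum_of_sq_le_mul _ (fun i _ => hw0 i)
          (fun i _ => mul_nonneg (hw0 i) (sq_nonneg _))
          fun i _ => (by ring : (w i * g i) ^ 2 = w i * (w i * g i ^ 2)).le
    _ = ∑ i, w i * g i ^ 2 := by rw [hw1, one_mul]
    _ ≤ ∑ i, C * d i * g i ^ 2 := by gcongr with i; exact hwd i
    _ = C * ∑ i, d i * g i ^ 2 := by simp only [Finset.mul_sum, mul_assoc]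

section Occupancy

variable {S A : Type*} [Fintype S] [Fintype A] {P : S → A → S → ℝ} {pol : S → A → ℝ}
  {d0 : S → ℝ} {γ : ℝ}

def occtExpect (P : S → A → S → ℝ) (pol : S → A → ℝ) (d0 : S → ℝ) (t : ℕ)
    (h : S → A → ℝ) : ℝ :=
  ∑ s, ∑ a, occt P pol d0 t s a * h s a

theorem occt_nonneg (hP0 : ∀ s a s', 0 ≤ P s a s') (hd00 : ∀ s, 0 ≤ d0 s)
    (hpol0 : ∀ s a, 0 ≤ pol s a) (t : ℕ) (s : S) (a : A) : 0 ≤ occt P pol d0 t s a := by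
  induction t generalizing s a with
  | zero => exact mul_nonneg (hd00 s) (hpol0 s a)
  | succ t ih =>
    exact mul_nonneg (Finset.sum_nonneg fun _ _ => Finset.sum_nonneg fun _ _ =>
      mul_nonneg (ih _ _) (hP0 _ _ _)) (hpol0 s a)

theorem occtExpect_succ (t : ℕ) (h : S → A → ℝ) :
    occtExpect P pol d0 (t + 1) h
      = occtExpect P pol d0 t fun s a => ∑ s', P s a s' * ∑ a', pol s' a' * h s' a' := by
  simp only [occtExpect, occt, mul_assoc, ← Finset.mul_sum]
  simp only [Finset.sum_mul, mul_assoc]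
  rw [Finset.sum_comm]
  refine Finset.sum_congr rfl fun s _ => ?_
  rw [Finset.sum_comm]
  simp only [Finset.mul_sum]

theorem sum_occt (hP1 : ∀ s a, ∑ s', P s a s' = 1) (hd01 : ∑ s, d0 s = 1)
    (hpol1 : ∀ s, ∑ a, pol s a = 1) (t : ℕ) : ∑ s, ∑ a, occt P pol d0 t s a = 1 := by
  induction t with
  | zero => simp only [occt, ← Finset.mul_sum, hpol1, mul_one, hd01]
  | succ t ih =>
    have h := occtExpect_succ (P := P) (pol := pol) (d0 := d0) t fun _ _ => 1
    simpa only [occtExpect, mul_one, hpol1, hP1, ih] using h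

theorem occtExpect_bellmanOp (R f : S → A → ℝ) (t : ℕ) :
    occtExpect P pol d0 t (bellmanOp P R γ pol f)
      = occtExpect P pol d0 t R + γ * occtExpect P pol d0 (t + 1) f := by
  rw [occtExpect_succ]
  simp only [occtExpect, bellmanOp, mul_add, Finset.sum_add_distrib, Finset.mul_sum,
    mul_left_comm γ]

theorem docc_nonneg (hnn : ∀ t s a, 0 ≤ occt P pol d0 t s a) (hγ0 : 0 ≤ γ) (hγ1 : γ ≤ 1)
    (s : S) (a : A) : 0 ≤ docc P pol d0 γ s a :=
  mul_nonneg (sub_nonneg.mpr hγ1) (tsum_nonneg fun t => mul_nonneg (pow_nonneg hγ0 t) (hnn t s a))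

theorem occt_le_one (hnn : ∀ t s a, 0 ≤ occt P pol d0 t s a)
    (hmass : ∀ t, ∑ s, ∑ a, occt P pol d0 t s a = 1) (t : ℕ) (s : S) (a : A) :
    occt P pol d0 t s a ≤ 1 :=
  calc occt P pol d0 t s a ≤ ∑ a', occt P pol d0 t s a' :=
        Finset.single_le_sum (fun a' _ => hnn t s a') (Finset.mem_univ a)
    _ ≤ ∑ s', ∑ a', occt P pol d0 t s' a' :=
        Finset.single_le_sum (f := fun s' => ∑ a', occt P pol d0 t s' a')
          (fun s' _ => Finset.sum_nonneg fun a' _ => hnn t s' a') (Finset.mem_univ s)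
    _ = 1 := hmass t

theorem summable_geometric_mul_occt (hnn : ∀ t s a, 0 ≤ occt P pol d0 t s a)
    (hmass : ∀ t, ∑ s, ∑ a, occt P pol d0 t s a = 1) (hγ0 : 0 ≤ γ) (hγ1 : γ < 1)
    (s : S) (a : A) : Summable fun t => γ ^ t * occt P pol d0 t s a :=
  (summable_geometric_of_lt_one hγ0 hγ1).of_nonneg_of_le
    (fun t => mul_nonneg (pow_nonneg hγ0 t) (hnn t s a))
    (fun t => mul_le_of_le_one_right (pow_nonneg hγ0 t) (occt_le_one hnn hmass t s a))

theorem summable_geometric_mul_occtExpect (hnn : ∀ t s a, 0 ≤ occt P pol d0 t s a)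
    (hmass : ∀ t, ∑ s, ∑ a, occt P pol d0 t s a = 1) (hγ0 : 0 ≤ γ) (hγ1 : γ < 1)
    (h : S → A → ℝ) : Summable fun t => γ ^ t * occtExpect P pol d0 t h := by
  simp only [occtExpect, Finset.mul_sum, ← mul_assoc]
  exact summable_sum fun s _ => summable_sum fun a _ =>
    (summable_geometric_mul_occt hnn hmass hγ0 hγ1 s a).mul_right _

theorem tsum_geometric_mul_occtExpect (hnn : ∀ t s a, 0 ≤ occt P pol d0 t s a)
    (hmass : ∀ t, ∑ s, ∑ a, occt P pol d0 t s a = 1) (hγ0 : 0 ≤ γ) (hγ1 : γ < 1)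
    (h : S → A → ℝ) :
    ∑' t, γ ^ t * occtExpect P pol d0 t h
      = (1 - γ)⁻¹ * ∑ s, ∑ a, docc P pol d0 γ s a * h s a := by
  have hsum := summable_geometric_mul_occt hnn hmass hγ0 hγ1
  simp only [occtExpect, docc, Finset.mul_sum, ← mul_assoc,
    inv_mul_cancel_left₀ (sub_ne_zero.mpr hγ1.ne')]
  rw [Summable.tsum_finsetSum fun s _ => summable_sum fun a _ => (hsum s a).mul_right _]
  refine Finset.sum_congr rfl fun s _ => ?_
  rw [Summable.tsum_finsetSum fun a _ => (hsum s a).mul_right _]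
  exact Finset.sum_congr rfl fun a _ => tsum_mul_right

theorem sum_docc (hnn : ∀ t s a, 0 ≤ occt P pol d0 t s a)
    (hmass : ∀ t, ∑ s, ∑ a, occt P pol d0 t s a = 1) (hγ0 : 0 ≤ γ) (hγ1 : γ < 1) :
    ∑ s, ∑ a, docc P pol d0 γ s a = 1 := by
  have h := tsum_geometric_mul_occtExpect hnn hmass hγ0 hγ1 fun _ _ => 1
  simp only [occtExpect, mul_one, hmass, tsum_geometric_of_lt_one hγ0 hγ1] at h
  exact (mul_eq_left₀ (inv_ne_zero (sub_ne_zero.mpr hγ1.ne'))).mp h.symm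

theorem Jf_sub_Jret (hnn : ∀ t s a, 0 ≤ occt P pol d0 t s a)
    (hmass : ∀ t, ∑ s, ∑ a, occt P pol d0 t s a = 1) (hγ0 : 0 ≤ γ) (hγ1 : γ < 1)
    (R f : S → A → ℝ) :
    Jf d0 pol f - Jret P R γ pol d0
      = (1 - γ)⁻¹ *
          ∑ s, ∑ a, docc P pol d0 γ s a * (f s a - bellmanOp P R γ pol f s a) := by
  rw [← tsum_geometric_mul_occtExpect hnn hmass hγ0 hγ1]
  set u := fun t => γ ^ t * occtExpect P pol d0 t f with hu
  have hsum := summable_geometric_mul_occtExpect hnn hmass hγ0 hγ1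
  have hstep : ∀ t, γ ^ t * occtExpect P pol d0 t (fun s a => f s a - bellmanOp P R γ pol f s a)
      = u t - γ ^ t * occtExpect P pol d0 t R - u (t + 1) := by
    intro t
    have hsub : occtExpect P pol d0 t (fun s a => f s a - bellmanOp P R γ pol f s a)
        = occtExpect P pol d0 t f - occtExpect P pol d0 t (bellmanOp P R γ pol f) := by
      simp only [occtExpect, mul_sub, Finset.sum_sub_distrib]
    rw [hsub, occtExpect_bellmanOp, hu]
    ring
  have hJf : Jf d0 pol f = u 0 := by
    simp only [hu, Jf, occtExpect, occt, pow_zero, one_mul, Finset.mul_sum, mul_assoc]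
  have hJret : Jret P R γ pol d0 = ∑' t, γ ^ t * occtExpect P pol d0 t R := rfl
  rw [tsum_congr hstep, ((hsum f).sub (hsum R)).tsum_sub ((summable_nat_add_iff 1).2 (hsum f)),
    (hsum f).tsum_sub (hsum R), (hsum f).tsum_eq_zero_add, hJf, hJret]
  ring

end Occupancy

theorem error_propagation_under_coverage_general {S A : Type*} [Fintype S] [Fintype A]
    (P : S → A → S → ℝ) (R : S → A → ℝ) (γ : ℝ) (d0 : S → ℝ)
    (pol : S → A → ℝ)
    (hP0 : ∀ s a s', 0 ≤ P s a s') (hP1 : ∀ s a, ∑ s', P s a s' = 1)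
    (hγ0 : 0 ≤ γ) (hγ1 : γ < 1)
    (hd00 : ∀ s, 0 ≤ d0 s) (hd01 : ∑ s, d0 s = 1)
    (hpol0 : ∀ s a, 0 ≤ pol s a) (hpol1 : ∀ s, ∑ a, pol s a = 1)
    (dD : S → A → ℝ)
    (Cπ : ℝ) (hCπ : 0 ≤ Cπ)
    (hcov : ∀ s a, docc P pol d0 γ s a ≤ Cπ * dD s a)
    (f : S → A → ℝ) :
    |Jf d0 pol f - Jret P R γ pol d0| ≤
      (Real.sqrt Cπ / (1 - γ)) *
        Real.sqrt (∑ s, ∑ a, dD s a * (f s a - bellmanOp P R γ pol f s a) ^ 2) := by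
  have hnn := occt_nonneg hP0 hd00 hpol0
  have hmass := sum_occt hP1 hd01 hpol1
  have hcs := abs_sum_mul_le_sqrt_mul_sqrt_of_le_mul
    (w := fun p : S × A => docc P pol d0 γ p.1 p.2) hCπ
    (fun p => docc_nonneg hnn hγ0 hγ1.le p.1 p.2)
    (by rw [Fintype.sum_prod_type']; exact sum_docc hnn hmass hγ0 hγ1)
    (fun p => hcov p.1 p.2) fun p => f p.1 p.2 - bellmanOp P R γ pol f p.1 p.2
  simp only [Fintype.sum_prod_type] at hcs
  rw [Jf_sub_Jret hnn hmass hγ0 hγ1, abs_mul, abs_inv, abs_of_pos (sub_pos.mpr hγ1),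
    div_eq_inv_mul, mul_assoc]
  exact mul_le_mul_of_nonneg_left hcs (inv_nonneg.mpr (sub_nonneg.mpr hγ1.le))

/-- **Error propagation under state-action coverage.** If `d^π(s,a) ≤ C_π d^D(s,a)`
for all `(s,a)`, then for any `f : S×A → ℝ`,
`|J_f(π) − J(π)| ≤ (√C_π/(1−γ)) · √(E_{d^D}[(f − T^π f)²])`. -/
theorem error_propagation_under_coverage {S A : Type*} [Fintype S] [Fintype A]
    (P : S → A → S → ℝ) (R : S → A → ℝ) (Rmax γ : ℝ) (d0 : S → ℝ)
    (pol : S → A → ℝ)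
    (hP0 : ∀ s a s', 0 ≤ P s a s') (hP1 : ∀ s a, ∑ s', P s a s' = 1)
    (hR : ∀ s a, 0 ≤ R s a ∧ R s a ≤ Rmax)
    (hγ0 : 0 ≤ γ) (hγ1 : γ < 1)
    (hd00 : ∀ s, 0 ≤ d0 s) (hd01 : ∑ s, d0 s = 1)
    (hpol0 : ∀ s a, 0 ≤ pol s a) (hpol1 : ∀ s, ∑ a, pol s a = 1)
    (dD : S → A → ℝ)
    (hdD0 : ∀ s a, 0 ≤ dD s a) (hdD1 : ∑ s, ∑ a, dD s a = 1)
    (Cπ : ℝ) (hCπ : 0 ≤ Cπ)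
    (hcov : ∀ s a, docc P pol d0 γ s a ≤ Cπ * dD s a)
    (f : S → A → ℝ) :
    |Jf d0 pol f - Jret P R γ pol d0| ≤
      (Real.sqrt Cπ / (1 - γ)) *
        Real.sqrt (∑ s, ∑ a, dD s a * (f s a - bellmanOp P R γ pol f s a) ^ 2) :=
  error_propagation_under_coverage_general P R γ d0 pol hP0 hP1 hγ0 hγ1 hd00 hd01 hpol0 hpol1 dD Cπ
    hCπ hcov f
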